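/- For all nonnegative integers m and n, ∑_{k=0}^∞ (k+2m)!(k+2n)!/(k!·(2k+2m+2n+1)!!) = π/2^{m+n+1} · (2m)!(2n)!/(m!·n!). -/

import Mathlib

/-!
Write `a m n k` for the summand. Clearing factorials gives the recurrence
`a (m+1) n k + (k+1) a m n (k+1) = (2m+1+k) a m n k`, so the partial sums telescope:
`S_{m+1}(N) = (2m+1) S_m(N) - N a m n N`. Both partial sums are monotone and bounded, so the
tail `N a m n N` converges, and its limit is `0` because `a m n` is summable. Hence raising
`m` (or, by symmetry, `n`) by one multiplies the sum by `2m+1`, exactly as it does the closed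
form. The base case `∑ k!/(2k+1)‼ = π/2` holds because `k!/(2k+1)‼ = ∫₀¹ (2x(1-x))^k dx`
(a Beta integral), and summing the geometric series under the integral leaves
`∫₀¹ dx/(1 - 2x(1-x)) = [arctan (2x-1)]₀¹ = π/2`.
-/

open Filter Finset Real
open MeasureTheory
open scoped Nat Topology

theorem Summable.eq_zero_of_tendsto_natCast_mul {f : ℕ → ℝ} {c : ℝ} (hf : Summable f)
    (h : Tendsto (fun n : ℕ => (n : ℝ) * f n) atTop (𝓝 c)) : c = 0 := by
  by_contra hc
  -- otherwise `|f n| ≥ |c| / (2n)` eventually, and the harmonic series would converge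
  have hc' : 0 < |c| := abs_pos.2 hc
  refine not_summable_natCast_inv (hf.abs.mul_left (2 / |c|) |>.of_norm_bounded_eventually_nat ?_)
  filter_upwards [h.abs.eventually_const_lt (half_lt_self hc')] with n hn
  have hn0 : (0 : ℝ) < n := by
    rcases (Nat.cast_nonneg (α := ℝ) n).eq_or_lt with h0 | h0
    · rw [← h0, zero_mul, abs_zero] at hn; linarith
    · exact h0
  rw [abs_mul, Nat.abs_cast] at hn
  rw [norm_inv, Real.norm_natCast, inv_le_iff_one_le_mul₀ hn0]
  calc (1 : ℝ) ≤ n * |f n| / (|c| / 2) := (one_le_div (by positivity)).2 hn.le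
    _ = 2 / |c| * |f n| * n := by field_simp

theorem integral_pow_mul_one_sub_pow (k : ℕ) :
    ∫ x in (0 : ℝ)..1, x ^ k * (1 - x) ^ k = (k ! : ℝ) ^ 2 / (2 * k + 1)! := by
  have hre : 0 < ((k : ℂ) + 1).re := by simp; positivity
  have hbeta := Complex.Gamma_mul_Gamma_eq_betaIntegral hre hre
  have hB : Complex.betaIntegral (k + 1) (k + 1) =
      ((∫ x in (0 : ℝ)..1, x ^ k * (1 - x) ^ k : ℝ) : ℂ) := by
    rw [Complex.betaIntegral, ← intervalIntegral.integral_ofReal]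
    refine intervalIntegral.integral_congr fun x _ => ?_
    simp only [add_sub_cancel_right, Complex.cpow_natCast]
    push_cast; ring
  rw [hB, show (k : ℂ) + 1 + (k + 1) = ((2 * k + 1 : ℕ) : ℂ) + 1 by push_cast; ring,
    Complex.Gamma_nat_eq_factorial, Complex.Gamma_nat_eq_factorial] at hbeta
  have hbeta' : (k ! : ℝ) * k ! = (2 * k + 1)! * ∫ x in (0 : ℝ)..1, x ^ k * (1 - x) ^ k := by
    exact_mod_cast hbeta
  rw [eq_div_iff (by positivity)]
  linear_combination -hbeta'

theorem integral_two_mul_mul_one_sub_pow (k : ℕ) :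
    ∫ x in (0 : ℝ)..1, (2 * x * (1 - x)) ^ k = (k ! : ℝ) / (2 * k + 1)‼ := by
  have hfac : ((2 * k + 1)! : ℝ) = (2 * k + 1)‼ * (2 ^ k * k !) := by
    rw [Nat.factorial_eq_mul_doubleFactorial, Nat.doubleFactorial_two_mul]; push_cast; ring
  simp_rw [mul_assoc, mul_pow]
  rw [intervalIntegral.integral_const_mul, integral_pow_mul_one_sub_pow, hfac]
  have : ((2 * k + 1)‼ : ℝ) ≠ 0 := by positivity
  field_simp

theorem integral_inv_one_sub_two_mul_mul_one_sub :
    ∫ x in (0 : ℝ)..1, (1 - 2 * x * (1 - x))⁻¹ = π / 2 := by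
  have hpos : ∀ x : ℝ, 0 < 1 - 2 * x * (1 - x) := fun x => by nlinarith [sq_nonneg (2 * x - 1)]
  have hderiv : ∀ x ∈ Set.uIcc (0 : ℝ) 1,
      HasDerivAt (fun y => arctan (2 * y - 1)) (1 - 2 * x * (1 - x))⁻¹ x := by
    intro x _
    convert (((hasDerivAt_id' x).const_mul 2).sub_const 1).arctan using 1
    rw [show 1 + (2 * x - 1) ^ 2 = 2 * (1 - 2 * x * (1 - x)) by ring]
    field_simp
  have hcont : Continuous fun x : ℝ => (1 - 2 * x * (1 - x))⁻¹ :=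
    (by fun_prop : Continuous fun x : ℝ => 1 - 2 * x * (1 - x)).inv₀ fun x => (hpos x).ne'
  rw [intervalIntegral.integral_eq_sub_of_hasDerivAt hderiv (hcont.intervalIntegrable 0 1)]
  norm_num [arctan_one, arctan_neg]
  ring

theorem hasSum_factorial_div_doubleFactorial :
    HasSum (fun k : ℕ => (k ! : ℝ) / (2 * k + 1)‼) (π / 2) := by
  have hbound : ∀ x ∈ Set.uIoc (0 : ℝ) 1, ‖2 * x * (1 - x)‖ ≤ 1 / 2 := by
    intro x hx
    rw [Set.uIoc_of_le zero_le_one] at hx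
    rw [Real.norm_eq_abs, abs_le]
    constructor <;> nlinarith [hx.1, hx.2, sq_nonneg (2 * x - 1)]
  simp_rw [← integral_two_mul_mul_one_sub_pow, ← integral_inv_one_sub_two_mul_mul_one_sub]
  refine intervalIntegral.hasSum_integral_of_dominated_convergence (fun k _ => (1 / 2 : ℝ) ^ k)
    (fun k => (by fun_prop : Continuous fun x : ℝ => (2 * x * (1 - x)) ^ k).aestronglyMeasurable)
    (fun k => ae_of_all _ fun x hx => ?_) (ae_of_all _ fun _ _ => summable_geometric_two)
    intervalIntegrable_const (ae_of_all _ fun x hx => hasSum_geometric_of_norm_lt_one ?_)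
  · rw [norm_pow]; exact pow_le_pow_left₀ (norm_nonneg _) (hbound x hx) k
  · exact (hbound x hx).trans_lt (by norm_num)

noncomputable def summand (m n k : ℕ) : ℝ :=
  (k + 2 * m)! * (k + 2 * n)! / (k ! * (2 * k + 2 * m + 2 * n + 1)‼)

noncomputable def closedForm (m n : ℕ) : ℝ :=
  π / 2 ^ (m + n + 1) * ((2 * m)! * (2 * n)!) / (m ! * n !)

theorem summand_pos (m n k : ℕ) : 0 < summand m n k := by
  unfold summand; positivity

theorem summand_comm (m n k : ℕ) : summand m n k = summand n m k := by
  rw [summand, summand, add_right_comm (2 * k), mul_comm ((k + 2 * m)! : ℝ)]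

theorem summand_zero_zero (k : ℕ) : summand 0 0 k = k ! / (2 * k + 1)‼ := by
  have : (k ! : ℝ) ≠ 0 := by positivity
  simp only [summand, mul_zero, add_zero]
  field_simp

theorem summand_succ_left_add (m n k : ℕ) :
    summand (m + 1) n k + (k + 1) * summand m n (k + 1) = (2 * m + 1 + k) * summand m n k := by
  rw [summand, summand, summand, show k + 2 * (m + 1) = k + 2 * m + 1 + 1 by ring,
    show k + 1 + 2 * m = k + 2 * m + 1 by ring, show k + 1 + 2 * n = k + 2 * n + 1 by ring,
    show 2 * k + 2 * (m + 1) + 2 * n + 1 = 2 * k + 2 * m + 2 * n + 1 + 2 by ring,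
    show 2 * (k + 1) + 2 * m + 2 * n + 1 = 2 * k + 2 * m + 2 * n + 1 + 2 by ring]
  simp only [Nat.factorial_succ, Nat.doubleFactorial_add_two]
  have : ((2 * k + 2 * m + 2 * n + 1)‼ : ℝ) ≠ 0 := by positivity
  have : (k ! : ℝ) ≠ 0 := by positivity
  push_cast
  field_simp
  ring

theorem sum_range_summand_succ_left (m n N : ℕ) :
    ∑ k ∈ range N, summand (m + 1) n k =
      (2 * m + 1) * ∑ k ∈ range N, summand m n k - N * summand m n N := by
  induction N with
  | zero => simp
  | succ N ih =>
    rw [sum_range_succ, sum_range_succ, ih]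
    push_cast
    linear_combination summand_succ_left_add m n N

theorem closedForm_succ_left (m n : ℕ) :
    closedForm (m + 1) n = (2 * m + 1) * closedForm m n := by
  rw [closedForm, closedForm, show 2 * (m + 1) = 2 * m + 1 + 1 by ring, add_right_comm m 1 n]
  simp only [Nat.factorial_succ, pow_succ]
  have : (m ! : ℝ) ≠ 0 := by positivity
  have : (n ! : ℝ) ≠ 0 := by positivity
  push_cast
  field_simp
  ring

theorem closedForm_comm (m n : ℕ) : closedForm m n = closedForm n m := by
  rw [closedForm, closedForm, add_comm m n, mul_comm ((2 * m)! : ℝ), mul_comm (m ! : ℝ)]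

theorem closedForm_zero_zero : closedForm 0 0 = π / 2 := by
  simp [closedForm]

theorem monotone_sum_range_summand (m n : ℕ) :
    Monotone fun N => ∑ k ∈ range N, summand m n k :=
  monotone_nat_of_le_succ fun N => by
    rw [sum_range_succ]; exact le_add_of_nonneg_right (summand_pos m n N).le

theorem tendsto_sum_summand_succ_left {m n : ℕ}
    (h : Tendsto (fun N => ∑ k ∈ range N, summand m n k) atTop (𝓝 (closedForm m n))) :
    Tendsto (fun N => ∑ k ∈ range N, summand (m + 1) n k) atTop
      (𝓝 (closedForm (m + 1) n)) := by
  have hle : ∀ N, ∑ k ∈ range N, summand m n k ≤ closedForm m n :=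
    (monotone_sum_range_summand m n).ge_of_tendsto h
  have hbdd : BddAbove (Set.range fun N => ∑ k ∈ range N, summand (m + 1) n k) := by
    refine ⟨(2 * m + 1) * closedForm m n, Set.forall_mem_range.2 fun N => ?_⟩
    rw [sum_range_summand_succ_left]
    nlinarith [hle N, (summand_pos m n N).le, (Nat.cast_nonneg (α := ℝ) N)]
  obtain ⟨s, hlim⟩ :
      ∃ s, Tendsto (fun N => ∑ k ∈ range N, summand (m + 1) n k) atTop (𝓝 s) :=
    ⟨_, tendsto_atTop_ciSup (monotone_sum_range_summand (m + 1) n) hbdd⟩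
  have htail : Tendsto (fun N : ℕ => (N : ℝ) * summand m n N) atTop
      (𝓝 ((2 * m + 1) * closedForm m n - s)) :=
    ((h.const_mul _).sub hlim).congr fun N => by rw [sum_range_summand_succ_left]; ring
  have hsum : Summable (summand m n) :=
    ((hasSum_iff_tendsto_nat_of_nonneg (fun k => (summand_pos m n k).le) _).2 h).summable
  rw [closedForm_succ_left, sub_eq_zero.1 (hsum.eq_zero_of_tendsto_natCast_mul htail)]
  exact hlim

theorem tendsto_sum_summand (m n : ℕ) :
    Tendsto (fun N => ∑ k ∈ range N, summand m n k) atTop (𝓝 (closedForm m n)) := by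
  have hzero :
      Tendsto (fun N => ∑ k ∈ range N, summand 0 0 k) atTop (𝓝 (closedForm 0 0)) := by
    simpa only [summand_zero_zero, closedForm_zero_zero] using
      hasSum_factorial_div_doubleFactorial.tendsto_sum_nat
  have hleft :
      ∀ m, Tendsto (fun N => ∑ k ∈ range N, summand m 0 k) atTop (𝓝 (closedForm m 0)) :=
    fun m => Nat.rec hzero (fun _ ih => tendsto_sum_summand_succ_left ih) m
  induction m with
  | zero => simpa only [summand_comm n 0, closedForm_comm n 0] using hleft n
  | succ m ih => exact tendsto_sum_summand_succ_left ih

theorem stmt4 (m n : ℕ) :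
    Tendsto (fun N => ∑ k ∈ range N,
      (Nat.factorial (k + 2 * m) : ℝ) * (Nat.factorial (k + 2 * n) : ℝ) /
        ((Nat.factorial k : ℝ) * (Nat.doubleFactorial (2 * k + 2 * m + 2 * n + 1) : ℝ)))
      atTop (nhds (Real.pi / 2 ^ (m + n + 1) *
        ((Nat.factorial (2 * m) : ℝ) * (Nat.factorial (2 * n) : ℝ)) /
        ((Nat.factorial m : ℝ) * (Nat.factorial n : ℝ)))) :=
  tendsto_sum_summand m n
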